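/- arXiv:1812.11469 — 2 statements merged into one kernel-verified Lean document; each statement's English description precedes it below -/
import Mathlib

section
/- Let A be a solvable polynomial algebra with admissible system (B, ≺) which is an ℕ-filtered algebra of (B, d)-type for a positive-degree function d. Define ≺_gr on B by: a^α ≺_gr a^β iff d(a^α) < d(a^β), or d(a^α) = d(a^β) and a^α ≺ a^β. Then (B, ≺_gr) is again an admissible system for A (i.e., ≺_gr is a monomial ordering satisfying the solvability condition), and ≺_gr is a graded monomial ordering with respect to d. -/
/-! The graded order `≺_gr` is the pullback of the lexicographic order on `ℕ ×ₗ ℕⁿ` along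
`α ↦ (d α, α)`, hence a well-order. Since `d` is additive, adding `γ` shifts both degrees
by `d γ`, so compatibility with addition is inherited from `≺`. In a product `a^α a^β` every
lower term `a^γ` satisfies `d γ ≤ d α + d β = d (α + β)` by the filtration and `γ ≺ α + β` by
solvability, which together give `γ ≺_gr α + β`. -/

/-- The order `≺_gr` built from the degree `d` and the ordering `r = ≺`. -/
def gradedRefinement {α : Type*} (d : α → ℕ) (r : α → α → Prop) (a b : α) : Prop :=
  d a < d b ∨ d a = d b ∧ r a b

namespace gradedRefinement

variable {α : Type*} {d : α → ℕ} {r : α → α → Prop} {a b : α}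

theorem isWellOrder (d : α → ℕ) (r : α → α → Prop) [IsWellOrder α r] :
    IsWellOrder α (gradedRefinement d r) :=
  let e : gradedRefinement d r ↪r Prod.Lex (· < ·) r :=
    ⟨⟨fun a => (d a, a), fun _ _ h => congrArg Prod.snd h⟩, Prod.lex_def⟩
  e.isWellOrder

theorem of_le_of_rel (hd : d a ≤ d b) (hr : r a b) : gradedRefinement d r a b :=
  hd.lt_or_eq.imp_right (⟨·, hr⟩)

theorem le (h : gradedRefinement d r a b) : d a ≤ d b :=
  h.elim le_of_lt (·.1.le)

theorem add_right [Add α] (hd : ∀ x y, d (x + y) = d x + d y)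
    (hr : ∀ x y z, r x y → r (x + z) (y + z)) (c : α) (h : gradedRefinement d r a b) :
    gradedRefinement d r (a + c) (b + c) := by
  rw [gradedRefinement, hd, hd]
  exact h.imp (by omega) fun ⟨hdab, hrab⟩ => ⟨by rw [hdab], hr _ _ _ hrab⟩

end gradedRefinement

theorem stmt_18_general (n : ℕ) (m : Fin n → ℕ)
    (d : (Fin n → ℕ) → ℕ) (hd : ∀ α, d α = ∑ i, α i * m i)
    (K : Type*) [Field K] (A : Type*) [Ring A] [Algebra K A]
    (b : Module.Basis (Fin n → ℕ) K A)
    (prec : (Fin n → ℕ) → (Fin n → ℕ) → Prop)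
    (hwo : IsWellOrder (Fin n → ℕ) prec)
    (hzero : ∀ α : Fin n → ℕ, α = 0 ∨ prec 0 α)
    (hadd : ∀ α β γ : Fin n → ℕ, prec α β → prec (α + γ) (β + γ))
    (hsolv : ∀ α β : Fin n → ℕ,
      (b.repr (b α * b β)) (α + β) ≠ 0 ∧
      ∀ γ ∈ (b.repr (b α * b β)).support, γ ≠ α + β → prec γ (α + β))
    (hfilt : ∀ α β : Fin n → ℕ,
      ∀ γ ∈ (b.repr (b α * b β)).support, d γ ≤ d α + d β) :
    IsWellOrder (Fin n → ℕ) (fun α β => d α < d β ∨ (d α = d β ∧ prec α β)) ∧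
    (∀ α : Fin n → ℕ, α = 0 ∨ (d 0 < d α ∨ (d 0 = d α ∧ prec 0 α))) ∧
    (∀ α β γ : Fin n → ℕ, (d α < d β ∨ (d α = d β ∧ prec α β)) →
      (d (α + γ) < d (β + γ) ∨ (d (α + γ) = d (β + γ) ∧ prec (α + γ) (β + γ)))) ∧
    (∀ α β : Fin n → ℕ,
      (b.repr (b α * b β)) (α + β) ≠ 0 ∧
      ∀ γ ∈ (b.repr (b α * b β)).support, γ ≠ α + β →
        (d γ < d (α + β) ∨ (d γ = d (α + β) ∧ prec γ (α + β)))) ∧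
    (∀ α β : Fin n → ℕ, (d α < d β ∨ (d α = d β ∧ prec α β)) → d α ≤ d β) := by
  have d_add : ∀ α β, d (α + β) = d α + d β := fun α β => by
    simp only [hd, Pi.add_apply, add_mul, Finset.sum_add_distrib]
  have d_zero : d 0 = 0 := by simp [hd]
  refine ⟨gradedRefinement.isWellOrder d prec, fun α => ?_,
    fun α β γ => gradedRefinement.add_right d_add hadd γ, fun α β => ⟨(hsolv α β).1, ?_⟩,
    fun α β => gradedRefinement.le⟩
  · exact (hzero α).imp_right (gradedRefinement.of_le_of_rel (d_zero ▸ Nat.zero_le _))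
  · intro γ hγ hne
    exact gradedRefinement.of_le_of_rel (d_add α β ▸ hfilt α β γ hγ) ((hsolv α β).2 γ hγ hne)

/-- Proposition 4.2, (ii) ⟹ (i): `A` is a solvable polynomial
algebra with admissible system `(B, ≺)` (`prec` a monomial ordering, with the
solvability condition on products of basis monomials), and `A` is `ℕ`-filtered
of `(B,d)`-type for the positive-degree function `d(a^α) = Σ αᵢmᵢ` (products
of basis monomials expand with terms of degree `≤` the sum of the degrees).
Define `a^α ≺_gr a^β` iff `d(a^α) < d(a^β)`, or `d(a^α) = d(a^β)` and
`a^α ≺ a^β`.  Then `(B, ≺_gr)` is again an admissible system for `A`: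
`≺_gr` is a monomial ordering (well-order, `0` least, compatible with
addition) satisfying the solvability condition, and `≺_gr` is a graded
monomial ordering with respect to `d`. -/
theorem stmt_18 (n : ℕ) (m : Fin n → ℕ) (hm : ∀ i, 0 < m i)
    (d : (Fin n → ℕ) → ℕ) (hd : ∀ α, d α = ∑ i, α i * m i)
    (K : Type*) [Field K] (A : Type*) [Ring A] [Algebra K A]
    (b : Module.Basis (Fin n → ℕ) K A)
    (prec : (Fin n → ℕ) → (Fin n → ℕ) → Prop)
    (hwo : IsWellOrder (Fin n → ℕ) prec)
    (hzero : ∀ α : Fin n → ℕ, α = 0 ∨ prec 0 α)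
    (hadd : ∀ α β γ : Fin n → ℕ, prec α β → prec (α + γ) (β + γ))
    (hsolv : ∀ α β : Fin n → ℕ,
      (b.repr (b α * b β)) (α + β) ≠ 0 ∧
      ∀ γ ∈ (b.repr (b α * b β)).support, γ ≠ α + β → prec γ (α + β))
    (hfilt : ∀ α β : Fin n → ℕ,
      ∀ γ ∈ (b.repr (b α * b β)).support, d γ ≤ d α + d β) :
    IsWellOrder (Fin n → ℕ) (fun α β => d α < d β ∨ (d α = d β ∧ prec α β)) ∧
    (∀ α : Fin n → ℕ, α = 0 ∨ (d 0 < d α ∨ (d 0 = d α ∧ prec 0 α))) ∧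
    (∀ α β γ : Fin n → ℕ, (d α < d β ∨ (d α = d β ∧ prec α β)) →
      (d (α + γ) < d (β + γ) ∨ (d (α + γ) = d (β + γ) ∧ prec (α + γ) (β + γ)))) ∧
    (∀ α β : Fin n → ℕ,
      (b.repr (b α * b β)) (α + β) ≠ 0 ∧
      ∀ γ ∈ (b.repr (b α * b β)).support, γ ≠ α + β →
        (d γ < d (α + β) ∨ (d γ = d (α + β) ∧ prec γ (α + β)))) ∧
    (∀ α β : Fin n → ℕ, (d α < d β ∨ (d α = d β ∧ prec α β)) → d α ≤ d β) :=
  stmt_18_general n m d hd K A b prec hwo hzero hadd hsolv hfilt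
end

section
/- Let A be an ℕ-filtered solvable polynomial algebra of (B, d)-type with graded monomial ordering ≺_gr, and let f = λ a^α + Σⱼ μⱼ a^{α(j)} be nonzero with d(f) = p and leading monomial LM(f) = a^α (with respect to ≺_gr). Then the principal symbol satisfies σ(f) = λ σ(a)^α + Σ_{d(a^{α(j)}) = p} μⱼ σ(a)^{α(j)} in G(A), and LM(σ(f)) = σ(a)^α = σ(LM(f)) with respect to the induced ordering on σ(B). -/
/-!
Split `f` into its part of top degree `p` and a combination of basis vectors of degree `< p`.
The latter lies in `F (p - 1)`, the kernel of the symbol map, so `σ(f)` is the symbol of the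
top-degree part. Since `σ` sends a basis vector of degree `p` to the corresponding vector of the
basis `σ(B)`, the coordinates of `σ(f)` in `σ(B)` are those of `f` restricted to degree `p`.
This support still contains `LM(f)` because `d(LM(f)) = p`, and is contained in that of `f`,
so `LM(f)` stays its maximum.
-/

section PrincipalSymbol

variable {ι K A G : Type*} [Semiring K] [AddCommMonoid A] [Module K A]
  [AddCommMonoid G] [Module K G] {F : ℕ → Submodule K A} (φ : ∀ p : ℕ, F p →ₗ[K] G)
  (d : ι → ℕ)

theorem symbol_sum_eq_zero_of_degree_lt (b : ι → A)
    (hker : ∀ p : ℕ, ∀ x : F p, p ≠ 0 → (x : A) ∈ F (p - 1) → φ p x = 0)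
    (hbF : ∀ γ p, d γ ≤ p → b γ ∈ F p)
    {p : ℕ} (s : Finset ι) (a : ι → K) (hs : ∀ γ ∈ s, d γ < p)
    (hmem : ∑ γ ∈ s, a γ • b γ ∈ F p) :
    φ p ⟨_, hmem⟩ = 0 := by
  rcases eq_or_ne p 0 with rfl | hp
  · obtain rfl : s = ∅ := Finset.eq_empty_of_forall_notMem fun γ hγ => Nat.not_lt_zero _ (hs γ hγ)
    exact map_zero (φ 0)
  · refine hker p _ hp (Submodule.sum_mem _ fun γ hγ => Submodule.smul_mem _ _ ?_)
    exact hbF γ (p - 1) (Nat.le_sub_one_of_lt (hs γ hγ))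

theorem symbol_eq_sum_top_degree (b : Module.Basis ι K A)
    (hker : ∀ p : ℕ, ∀ x : F p, p ≠ 0 → (x : A) ∈ F (p - 1) → φ p x = 0)
    (hbF : ∀ γ p, d γ ≤ p → b γ ∈ F p)
    {f : A} {p : ℕ} (hfF : f ∈ F p) (hdeg : ∀ γ ∈ (b.repr f).support, d γ ≤ p) :
    φ p ⟨f, hfF⟩ =
      ∑ γ ∈ ((b.repr f).support.filter fun γ => d γ = p).attach,
        (b.repr f) γ.1 • φ p ⟨b γ.1, hbF γ.1 p (Finset.mem_filter.mp γ.2).2.le⟩ := by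
  set S := (b.repr f).support
  have htop : ∑ γ ∈ S.filter (fun γ => d γ = p), b.repr f γ • b γ ∈ F p :=
    Submodule.sum_mem _ fun γ hγ =>
      Submodule.smul_mem _ _ (hbF γ p (Finset.mem_filter.mp hγ).2.le)
  have hlow : ∑ γ ∈ S.filter (fun γ => ¬d γ = p), b.repr f γ • b γ ∈ F p :=
    Submodule.sum_mem _ fun γ hγ =>
      Submodule.smul_mem _ _ (hbF γ p (hdeg γ (Finset.mem_filter.mp hγ).1))
  have hsplit : (⟨f, hfF⟩ : F p) = ⟨_, htop⟩ + ⟨_, hlow⟩ := Subtype.ext <| calc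
    f = ∑ γ ∈ S, b.repr f γ • b γ := (b.linearCombination_repr f).symm
    _ = _ := (Finset.sum_filter_add_sum_filter_not _ _ _).symm
  have hlow0 : φ p ⟨_, hlow⟩ = 0 :=
    symbol_sum_eq_zero_of_degree_lt φ d b hker hbF _ _ (fun γ hγ =>
      have ⟨hγS, hγp⟩ := Finset.mem_filter.mp hγ
      lt_of_le_of_ne (hdeg γ hγS) hγp) hlow
  have htop_attach : (⟨_, htop⟩ : F p) = ∑ γ ∈ (S.filter fun γ => d γ = p).attach,
      (b.repr f) γ.1 • ⟨b γ.1, hbF γ.1 p (Finset.mem_filter.mp γ.2).2.le⟩ := by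
    ext
    push_cast
    exact (Finset.sum_attach _ (fun γ => b.repr f γ • b γ)).symm
  rw [hsplit, map_add, hlow0, add_zero, htop_attach, map_sum]
  simp only [map_smul]

theorem repr_symbol_eq_filter (b : Module.Basis ι K A) (c : Module.Basis ι K G)
    (hker : ∀ p : ℕ, ∀ x : F p, p ≠ 0 → (x : A) ∈ F (p - 1) → φ p x = 0)
    (hbF : ∀ γ p, d γ ≤ p → b γ ∈ F p)
    (hc : ∀ γ, c γ = φ (d γ) ⟨b γ, hbF γ (d γ) le_rfl⟩)
    {f : A} {p : ℕ} (hfF : f ∈ F p) (hdeg : ∀ γ ∈ (b.repr f).support, d γ ≤ p) :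
    c.repr (φ p ⟨f, hfF⟩) = (b.repr f).filter fun γ => d γ = p := by
  rw [symbol_eq_sum_top_degree φ d b hker hbF hfF hdeg, ← c.repr.apply_symm_apply
    ((b.repr f).filter _), c.repr_symm_apply, Finsupp.linearCombination_apply, Finsupp.sum,
    Finsupp.support_filter, ← Finset.sum_attach _ fun γ => (b.repr f).filter _ γ • c γ]
  congr 1
  refine Finset.sum_congr rfl fun ⟨γ, hγ⟩ _ => ?_
  obtain ⟨-, rfl⟩ := Finset.mem_filter.mp hγ
  rw [Finsupp.filter_apply, if_pos rfl, hc]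

end PrincipalSymbol

theorem stmt_19_general (n : ℕ)
    (d : (Fin n → ℕ) → ℕ)
    (K : Type*) [Field K] (A : Type*) [Ring A] [Algebra K A]
    (G : Type*) [Ring G] [Algebra K G]
    (b : Module.Basis (Fin n → ℕ) K A)
    (prec : (Fin n → ℕ) → (Fin n → ℕ) → Prop)
    (F : ℕ → Submodule K A)
    (hbmemF : ∀ (γ : Fin n → ℕ) (p : ℕ), d γ ≤ p → b γ ∈ F p)
    (φ : ∀ p : ℕ, F p →ₗ[K] G)
    (hker : ∀ p : ℕ, ∀ x : F p,
      φ p x = 0 ↔ ((p ≠ 0 ∧ (x : A) ∈ F (p - 1)) ∨ (p = 0 ∧ (x : A) = 0)))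
    (c : Module.Basis (Fin n → ℕ) K G)
    (hc : ∀ α : Fin n → ℕ, c α = φ (d α) ⟨b α, hbmemF α (d α) le_rfl⟩)
    (f : A)
    (p : ℕ) (hp : p = (b.repr f).support.sup d) (hfF : f ∈ F p)
    (α₀ : Fin n → ℕ) (hα₀ : α₀ ∈ (b.repr f).support)
    (hLM : ∀ γ ∈ (b.repr f).support, γ ≠ α₀ →
      (d γ < d α₀ ∨ (d γ = d α₀ ∧ prec γ α₀))) :
    (φ p ⟨f, hfF⟩ =
      ∑ γ ∈ ((b.repr f).support.filter fun γ => d γ = p).attach,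
        (b.repr f) γ.1 •
          φ p ⟨b γ.1, hbmemF γ.1 p (le_of_eq (Finset.mem_filter.mp γ.2).2)⟩) ∧
    α₀ ∈ (c.repr (φ p ⟨f, hfF⟩)).support ∧
    (∀ γ ∈ (c.repr (φ p ⟨f, hfF⟩)).support, γ ≠ α₀ →
      (d γ < d α₀ ∨ (d γ = d α₀ ∧ prec γ α₀))) := by
  have hker' : ∀ p : ℕ, ∀ x : F p, p ≠ 0 → (x : A) ∈ F (p - 1) → φ p x = 0 :=
    fun p x hp hx => (hker p x).mpr (.inl ⟨hp, hx⟩)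
  have hdeg_le : ∀ γ ∈ (b.repr f).support, d γ ≤ d α₀ := fun γ hγ => by
    rcases eq_or_ne γ α₀ with rfl | hne
    · exact le_rfl
    · rcases hLM γ hγ hne with h | h
      exacts [h.le, h.1.le]
  have hpα₀ : p = d α₀ := hp.trans (le_antisymm (Finset.sup_le hdeg_le) (Finset.le_sup hα₀))
  have hdeg : ∀ γ ∈ (b.repr f).support, d γ ≤ p := hpα₀ ▸ hdeg_le
  have hrepr := repr_symbol_eq_filter φ d b c hker' hbmemF hc hfF hdeg
  refine ⟨symbol_eq_sum_top_degree φ d b hker' hbmemF hfF hdeg, ?_, fun γ hγ => ?_⟩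
  · rw [hrepr, Finsupp.support_filter]
    exact Finset.mem_filter.mpr ⟨hα₀, hpα₀.symm⟩
  · rw [hrepr, Finsupp.support_filter] at hγ
    exact hLM γ (Finset.mem_filter.mp hγ).1

/-- Lemma 4.4(b): `A` is an `ℕ`-filtered solvable polynomial
algebra of `(B,d)`-type with admissible system `(B, ≺)` and graded monomial
ordering `≺_gr` (graded refinement of `≺` by `d`).  The associated graded
algebra `G(A)` is modeled by `G` via linear maps `φ p : F_pA → G` with
kernels `F_{p-1}A`, multiplicative; `G(A)` has PBW basis
`σ(B) = {σ(a)^α = φ (d α) (a^α)}`, given here as the basis `c` of `G`, with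
the induced ordering `σ(a)^α ≺_{G(A)} σ(a)^β ↔ a^α ≺_gr a^β`.  For nonzero
`f` with `d(f) = p` and leading monomial `LM(f) = a^{α₀}` w.r.t. `≺_gr`:
the principal symbol is `σ(f) = Σ_{d(α(j)) = p} μⱼ σ(a)^{α(j)}` (the image of
the terms of top degree), and `LM(σ(f)) = σ(a)^{α₀} = σ(LM(f))`, i.e. `α₀` is
the `≺_gr`-greatest element of the support of `σ(f)` in the basis `σ(B)`. -/
theorem stmt_19 (n : ℕ) (m : Fin n → ℕ) (hm : ∀ i, 0 < m i)
    (d : (Fin n → ℕ) → ℕ) (hd : ∀ α, d α = ∑ i, α i * m i)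
    (K : Type*) [Field K] (A : Type*) [Ring A] [Algebra K A]
    (G : Type*) [Ring G] [Algebra K G]
    (b : Module.Basis (Fin n → ℕ) K A)
    (prec : (Fin n → ℕ) → (Fin n → ℕ) → Prop)
    (hwo : IsWellOrder (Fin n → ℕ) prec)
    (hzero : ∀ α : Fin n → ℕ, α = 0 ∨ prec 0 α)
    (hadd : ∀ α β γ : Fin n → ℕ, prec α β → prec (α + γ) (β + γ))
    (hsolv : ∀ α β : Fin n → ℕ,
      (b.repr (b α * b β)) (α + β) ≠ 0 ∧
      ∀ γ ∈ (b.repr (b α * b β)).support, γ ≠ α + β →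
        (d γ < d (α + β) ∨ (d γ = d (α + β) ∧ prec γ (α + β))))
    (F : ℕ → Submodule K A)
    (hF : ∀ p, F p = Submodule.span K (b '' {α : Fin n → ℕ | d α ≤ p}))
    (hmono : Monotone F)
    (hFmul : ∀ p q : ℕ, ∀ x ∈ F p, ∀ y ∈ F q, x * y ∈ F (p + q))
    (hbmemF : ∀ (γ : Fin n → ℕ) (p : ℕ), d γ ≤ p → b γ ∈ F p)
    (φ : ∀ p : ℕ, F p →ₗ[K] G)
    (hker : ∀ p : ℕ, ∀ x : F p,
      φ p x = 0 ↔ ((p ≠ 0 ∧ (x : A) ∈ F (p - 1)) ∨ (p = 0 ∧ (x : A) = 0)))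
    (hφmul : ∀ (p q : ℕ) (x y : A) (hx : x ∈ F p) (hy : y ∈ F q),
      φ (p + q) ⟨x * y, hFmul p q x hx y hy⟩ = φ p ⟨x, hx⟩ * φ q ⟨y, hy⟩)
    (c : Module.Basis (Fin n → ℕ) K G)
    (hc : ∀ α : Fin n → ℕ, c α = φ (d α) ⟨b α, hbmemF α (d α) le_rfl⟩)
    (f : A) (hf : f ≠ 0)
    (p : ℕ) (hp : p = (b.repr f).support.sup d) (hfF : f ∈ F p)
    (α₀ : Fin n → ℕ) (hα₀ : α₀ ∈ (b.repr f).support)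
    (hLM : ∀ γ ∈ (b.repr f).support, γ ≠ α₀ →
      (d γ < d α₀ ∨ (d γ = d α₀ ∧ prec γ α₀))) :
    (φ p ⟨f, hfF⟩ =
      ∑ γ ∈ ((b.repr f).support.filter fun γ => d γ = p).attach,
        (b.repr f) γ.1 •
          φ p ⟨b γ.1, hbmemF γ.1 p (le_of_eq (Finset.mem_filter.mp γ.2).2)⟩) ∧
    α₀ ∈ (c.repr (φ p ⟨f, hfF⟩)).support ∧
    (∀ γ ∈ (c.repr (φ p ⟨f, hfF⟩)).support, γ ≠ α₀ →
      (d γ < d α₀ ∨ (d γ = d α₀ ∧ prec γ α₀))) :=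
  stmt_19_general n d K A G b prec F hbmemF φ hker c hc f p hp hfF α₀ hα₀ hLM
end
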